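/- (Doubling of variables.) Let u be a pathwise viscosity subsolution and v a pathwise viscosity supersolution of the stochastic HJB equation dv = −√ν ∇v ∘ dW(s) + (V(x) − ‖∇v‖²/2) ds with terminal data S, and fix R > 0. Then w(x,y,s) := u(x,s) − v(y,s) is a viscosity subsolution of the doubled equation on B_R(0) × B_R(0) × (0,T) in the following sense: whenever ψ : ℝⁿ × ℝⁿ → ℝ is of class C²_b, g ∈ C¹([0,T]), and the map (x,y,s) ↦ w(x,y,s) − Ψ_ψ(x,y,s) − g(s) attains a local maximum at a point (x₀,y₀,s₀) ∈ B_R(0) × B_R(0) × (0,T), then −g′(s₀) ≤ V(x₀) − V(y₀) − (‖∇_x Ψ_ψ(x₀,y₀,s₀)‖² − ‖∇_y Ψ_ψ(x₀,y₀,s₀)‖²)/2. -/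

import Mathlib

set_option synthInstance.maxHeartbeats 400000
set_option maxHeartbeats 1000000

open Filter Topology


open MeasureTheory Set

/-- `φ ∈ C²_b`: twice continuously differentiable with `φ` and its first two derivatives
bounded. -/
def IsC2b {E : Type*} [NormedAddCommGroup E] [NormedSpace ℝ E] (φ : E → ℝ) : Prop :=
  ContDiff ℝ 2 φ ∧ ∃ M : ℝ, ∀ y,
    |φ y| ≤ M ∧ ‖fderiv ℝ φ y‖ ≤ M ∧ ‖fderiv ℝ (fderiv ℝ φ) y‖ ≤ M


section Helpers

variable {E F : Type*} [NormedAddCommGroup E] [NormedSpace ℝ E]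
  [NormedAddCommGroup F] [NormedSpace ℝ F]

lemma isC2b_comp_affine {f : E → ℝ} (hf : IsC2b f) (L : F →L[ℝ] E) (hL : ‖L‖ ≤ 1)
    (b : E) : IsC2b (fun w => f (L w + b)) := by
  obtain ⟨hf2, M, hM⟩ := hf
  have hA : ∀ w : F, HasFDerivAt (fun w : F => L w + b) L w := fun w =>
    (L.hasFDerivAt).add_const b
  have hdf : Differentiable ℝ f := hf2.differentiable two_ne_zero
  have hF1 : ∀ w, HasFDerivAt (fun w => f (L w + b)) ((fderiv ℝ f (L w + b)).comp L) w :=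
    fun w => ((hdf (L w + b)).hasFDerivAt).comp w (hA w)
  have hfd : (fderiv ℝ (fun w => f (L w + b))) = fun w => (fderiv ℝ f (L w + b)).comp L :=
    funext fun w => (hF1 w).fderiv
  have hdf' : ContDiff ℝ 1 (fderiv ℝ f) := hf2.fderiv_right (by norm_num : (1:WithTop ℕ∞) + 1 ≤ 2)
  have hdf'd : Differentiable ℝ (fderiv ℝ f) := hdf'.differentiable one_ne_zero
  set Q : (E →L[ℝ] ℝ) →L[ℝ] (F →L[ℝ] ℝ) := (ContinuousLinearMap.compL ℝ F E ℝ).flip L with hQdef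
  have hQ : ∀ A : E →L[ℝ] ℝ, Q A = A.comp L := fun A => rfl
  have hF2 : ∀ w, HasFDerivAt (fun w => (fderiv ℝ f (L w + b)).comp L)
      (Q.comp ((fderiv ℝ (fderiv ℝ f) (L w + b)).comp L)) w := by
    intro w
    have h1 : HasFDerivAt (fun w => fderiv ℝ f (L w + b))
        ((fderiv ℝ (fderiv ℝ f) (L w + b)).comp L) w :=
      ((hdf'd (L w + b)).hasFDerivAt).comp w (hA w)
    have := Q.hasFDerivAt.comp w h1
    exact this
  refine ⟨hf2.comp ((L.contDiff).add contDiff_const), M, fun w => ?_⟩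
  have hM0 : (0:ℝ) ≤ M := le_trans (abs_nonneg _) (hM 0).1
  refine ⟨(hM _).1, ?_, ?_⟩
  · rw [hfd]
    calc ‖(fderiv ℝ f (L w + b)).comp L‖ ≤ ‖fderiv ℝ f (L w + b)‖ * ‖L‖ :=
          ContinuousLinearMap.opNorm_comp_le _ _
      _ ≤ M * 1 := mul_le_mul (hM _).2.1 hL (norm_nonneg _) hM0
      _ = M := mul_one M
  · rw [hfd, (hF2 w).fderiv]
    refine ContinuousLinearMap.opNorm_le_bound _ hM0 fun z => ?_
    have : (Q.comp ((fderiv ℝ (fderiv ℝ f) (L w + b)).comp L)) z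
        = ((fderiv ℝ (fderiv ℝ f) (L w + b)) (L z)).comp L := rfl
    rw [this]
    calc ‖((fderiv ℝ (fderiv ℝ f) (L w + b)) (L z)).comp L‖
        ≤ ‖(fderiv ℝ (fderiv ℝ f) (L w + b)) (L z)‖ * ‖L‖ :=
          ContinuousLinearMap.opNorm_comp_le _ _
      _ ≤ (‖fderiv ℝ (fderiv ℝ f) (L w + b)‖ * ‖L z‖) * 1 :=
          mul_le_mul (ContinuousLinearMap.le_opNorm _ _) hL (norm_nonneg _)
            (by positivity)
      _ ≤ (M * (‖L‖ * ‖z‖)) * 1 := by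
          gcongr
          exact (hM _).2.2
          exact L.le_opNorm z
      _ ≤ M * ‖z‖ := by
          rw [mul_one]
          calc M * (‖L‖ * ‖z‖) ≤ M * (1 * ‖z‖) := by gcongr
            _ = M * ‖z‖ := by ring

lemma isC2b_add {f g : E → ℝ} (hf : IsC2b f) (hg : IsC2b g) :
    IsC2b (fun w => f w + g w) := by
  obtain ⟨hf2, M, hM⟩ := hf
  obtain ⟨hg2, N, hN⟩ := hg
  have hdf : Differentiable ℝ f := hf2.differentiable two_ne_zero
  have hdg : Differentiable ℝ g := hg2.differentiable two_ne_zero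
  have hfd : (fderiv ℝ (fun w => f w + g w)) = fun w => fderiv ℝ f w + fderiv ℝ g w :=
    funext fun w => fderiv_add (hdf w) (hdg w)
  have hdf' : Differentiable ℝ (fderiv ℝ f) :=
    (hf2.fderiv_right (by norm_num : (1:WithTop ℕ∞) + 1 ≤ 2)).differentiable one_ne_zero
  have hdg' : Differentiable ℝ (fderiv ℝ g) :=
    (hg2.fderiv_right (by norm_num : (1:WithTop ℕ∞) + 1 ≤ 2)).differentiable one_ne_zero
  have hfd2 : fderiv ℝ (fderiv ℝ (fun w => f w + g w))
      = fun w => fderiv ℝ (fderiv ℝ f) w + fderiv ℝ (fderiv ℝ g) w := by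
    rw [hfd]
    exact funext fun w => fderiv_add (hdf' w) (hdg' w)
  refine ⟨hf2.add hg2, M + N, fun w => ?_⟩
  refine ⟨(abs_add_le _ _).trans (add_le_add (hM w).1 (hN w).1), ?_, ?_⟩
  · rw [hfd]
    exact (norm_add_le _ _).trans (add_le_add (hM w).2.1 (hN w).2.1)
  · rw [hfd2]
    exact (norm_add_le (fderiv ℝ (fderiv ℝ f) w) (fderiv ℝ (fderiv ℝ g) w)).trans
      (add_le_add (hM w).2.2 (hN w).2.2)

lemma isC2b_neg {f : E → ℝ} (hf : IsC2b f) : IsC2b (fun w => -(f w)) := by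
  obtain ⟨hf2, M, hM⟩ := hf
  have hfd : (fderiv ℝ (fun w => -(f w))) = fun w => -(fderiv ℝ f w) :=
    funext fun w => fderiv_neg (𝕜 := ℝ)
  have hfd2 : fderiv ℝ (fderiv ℝ (fun w => -(f w))) = fun w => -(fderiv ℝ (fderiv ℝ f) w) := by
    rw [hfd]; exact funext fun w => fderiv_neg (𝕜 := ℝ)
  refine ⟨hf2.neg, M, fun w => ?_⟩
  refine ⟨by rw [abs_neg]; exact (hM w).1, ?_, ?_⟩
  · rw [hfd, norm_neg]; exact (hM w).2.1
  · rw [hfd2]; exact (norm_neg (fderiv ℝ (fderiv ℝ f) w)).le.trans (hM w).2.2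

lemma isC2b_of_compactSupport {f : E → ℝ} (hf2 : ContDiff ℝ 2 f)
    (hsupp : HasCompactSupport f) : IsC2b f := by
  obtain ⟨C0, h0⟩ := hsupp.exists_bound_of_continuous hf2.continuous
  have hs1 : HasCompactSupport (fderiv ℝ f) := hsupp.fderiv (𝕜 := ℝ)
  obtain ⟨C1, h1⟩ := hs1.exists_bound_of_continuous (hf2.continuous_fderiv two_ne_zero)
  obtain ⟨K, hK⟩ := ContDiff.lipschitzWith_of_hasCompactSupport hs1
    (hf2.fderiv_right (by norm_num : (1:WithTop ℕ∞) + 1 ≤ 2)) one_ne_zero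
  have h2 : ∀ y, ‖fderiv ℝ (fderiv ℝ f) y‖ ≤ (K : ℝ) := fun y => norm_fderiv_le_of_lipschitz ℝ hK
  set C2 : ℝ := (K : ℝ)
  refine ⟨hf2, max C0 (max C1 C2), fun y => ?_⟩
  refine ⟨?_, ?_, ?_⟩
  · exact le_trans (by rw [← Real.norm_eq_abs]; exact h0 y) (le_max_left _ _)
  · exact le_trans (h1 y) (le_trans (le_max_left _ _) (le_max_right _ _))
  · exact le_trans (h2 y) (le_trans (le_max_right _ _) (le_max_right _ _))

end Helpers

section H2
variable {X : Type*} [MetricSpace X]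

/-- A function which is USC on a compact set, bounded above there, attains its max. -/
lemma usc_exists_max {K : Set X} (hK : IsCompact K) (hne : K.Nonempty)
    {f : X → ℝ} (hf : UpperSemicontinuousOn f K) (hb : ∃ C, ∀ x ∈ K, f x ≤ C) :
    ∃ p ∈ K, ∀ q ∈ K, f q ≤ f p := by
  obtain ⟨C, hC⟩ := hb
  have hbdd : BddAbove (f '' K) := ⟨C, by rintro _ ⟨x, hx, rfl⟩; exact hC x hx⟩
  have hneI : (f '' K).Nonempty := hne.image f
  set m := sSup (f '' K) with hm
  have hex : ∀ j : ℕ, ∃ x ∈ K, m - 1/(j+1) < f x := by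
    intro j
    have : m - 1/(j+1) < m := by
      have : (0:ℝ) < 1/(j+1) := by positivity
      linarith
    obtain ⟨_, ⟨x, hx, rfl⟩, hlt⟩ := exists_lt_of_lt_csSup hneI this
    exact ⟨x, hx, hlt⟩
  choose xs hxs hxs2 using hex
  obtain ⟨xbar, hxbarK, σ, hσ, hconv⟩ := hK.tendsto_subseq hxs
  refine ⟨xbar, hxbarK, fun q hq => ?_⟩
  have hqm : f q ≤ m := le_csSup hbdd ⟨q, hq, rfl⟩
  refine le_trans hqm ?_
  by_contra hlt
  push_neg at hlt
  obtain ⟨c, hc1, hc2⟩ := exists_between hlt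
  have hev1 : ∀ᶠ j in atTop, f (xs (σ j)) < c := by
    have := hf xbar hxbarK c hc1
    have htw : Tendsto (fun j => xs (σ j)) atTop (𝓝[K] xbar) :=
      tendsto_nhdsWithin_iff.2 ⟨hconv, Eventually.of_forall fun j => hxs _⟩
    exact htw.eventually this
  have hev2 : ∀ᶠ j in atTop, c < f (xs (σ j)) := by
    have h1 : Tendsto (fun j : ℕ => m - 1/(σ j + 1)) atTop (𝓝 m) := by
      have h2 : Tendsto (fun j : ℕ => 1/((j:ℝ)+1)) atTop (𝓝 0) :=
        tendsto_one_div_add_atTop_nhds_zero_nat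
      have h3 : Tendsto (fun j : ℕ => 1/((σ j : ℝ)+1)) atTop (𝓝 0) :=
        h2.comp hσ.tendsto_atTop
      simpa using tendsto_const_nhds.sub h3
    have := h1.eventually_const_lt hc2
    exact this.mono fun j hj => lt_of_lt_of_le hj (le_of_lt (hxs2 (σ j)))
  obtain ⟨j, h1, h2⟩ := (hev1.and hev2).exists
  exact absurd (h1.trans h2) (lt_irrefl _)

end H2

section H3
variable {E : Type*} [NormedAddCommGroup E] [InnerProductSpace ℝ E] [CompleteSpace E]

lemma norm_gradient_eq (f : E → ℝ) (x : E) : ‖gradient f x‖ = ‖fderiv ℝ f x‖ := by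
  rw [gradient]
  exact LinearIsometryEquiv.norm_map _ _

/-- USC composed with a continuous map is USC. -/
lemma UpperSemicontinuous.comp_cont {X Y : Type*} [TopologicalSpace X] [TopologicalSpace Y]
    {f : Y → ℝ} (hf : UpperSemicontinuous f) {g : X → Y} (hg : Continuous g) :
    UpperSemicontinuous (fun x => f (g x)) := fun x c hc =>
  (hg.continuousAt).eventually (hf (g x) c hc)

lemma LowerSemicontinuous.comp_cont {X Y : Type*} [TopologicalSpace X] [TopologicalSpace Y]
    {f : Y → ℝ} (hf : LowerSemicontinuous f) {g : X → Y} (hg : Continuous g) :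
    LowerSemicontinuous (fun x => f (g x)) := fun x c hc =>
  (hg.continuousAt).eventually (hf (g x) c hc)

lemma fderiv_comp_add_const' (f : E → ℝ) (hf : Differentiable ℝ f) (a x : E) :
    fderiv ℝ (fun z => f (z + a)) x = fderiv ℝ f (x + a) := by
  have h1 : HasFDerivAt (fun z : E => z + a) (ContinuousLinearMap.id ℝ E) x :=
    (hasFDerivAt_id x).add_const a
  have := ((hf (x + a)).hasFDerivAt).comp x h1
  have h := this.fderiv
  simp only [ContinuousLinearMap.comp_id] at h
  exact h

lemma fderiv_partial_fst (ψ : E × E → ℝ) (hψ : Differentiable ℝ ψ) (z c : E) :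
    fderiv ℝ (fun x => ψ (x, c)) z
      = (fderiv ℝ ψ (z, c)).comp (ContinuousLinearMap.inl ℝ E E) :=
  (((hψ (z, c)).hasFDerivAt).comp z (hasFDerivAt_prodMk_left z c)).fderiv

lemma fderiv_partial_snd (ψ : E × E → ℝ) (hψ : Differentiable ℝ ψ) (z c : E) :
    fderiv ℝ (fun y => ψ (c, y)) z
      = (fderiv ℝ ψ (c, z)).comp (ContinuousLinearMap.inr ℝ E E) :=
  (((hψ (c, z)).hasFDerivAt).comp z (hasFDerivAt_prodMk_right c z)).fderiv

end H3

/-- A smooth compactly-supported penalty vanishing exactly at `z₀` (within radius `ρ`),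
with vanishing derivative at `z₀`. -/
lemma exists_penalty {E : Type*} [NormedAddCommGroup E] [InnerProductSpace ℝ E]
    [FiniteDimensional ℝ E] (z₀ : E) (ρ : ℝ) (hρ : 0 < ρ) :
    ∃ p : E → ℝ, ContDiff ℝ 2 p ∧ HasCompactSupport p ∧ (∀ z, 0 ≤ p z) ∧ p z₀ = 0 ∧
      (∀ z, ‖z - z₀‖ < ρ → p z = 0 → z = z₀) ∧ fderiv ℝ p z₀ = 0 := by
  set bx : ContDiffBump z₀ := ⟨ρ/2, ρ, by linarith, by linarith⟩ with hbx
  have hns : ContDiff ℝ 2 fun z : E => ‖z - z₀‖^2 :=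
    ContDiff.norm_sq (𝕜 := ℝ) (contDiff_id.sub contDiff_const)
  refine ⟨fun z => bx z * ‖z - z₀‖^2, (bx.contDiff (n := 2)).mul hns,
    bx.hasCompactSupport.mul_right, fun z => mul_nonneg bx.nonneg (by positivity), by simp, ?_, ?_⟩
  · intro z hz h0
    rcases mul_eq_zero.1 h0 with h | h
    · exact absurd h (ne_of_gt (bx.pos_of_mem_ball (by simpa [Metric.mem_ball, dist_eq_norm] using hz)))
    · have : ‖z - z₀‖ = 0 := by
        have := pow_eq_zero_iff (n := 2) (by norm_num) |>.1 h
        exact this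
      rwa [norm_sub_eq_zero_iff] at this
  · have hev : (fun z => bx z * ‖z - z₀‖^2) =ᶠ[𝓝 z₀] (fun z => ‖z - z₀‖^2) := by
      filter_upwards [Metric.ball_mem_nhds z₀ (by positivity : (0:ℝ) < ρ/2)] with z hz
      rw [bx.one_of_mem_closedBall (Metric.ball_subset_closedBall hz), one_mul]
    rw [hev.fderiv_eq]
    have h1 : HasFDerivAt (fun z : E => z - z₀) (ContinuousLinearMap.id ℝ E) z₀ :=
      (hasFDerivAt_id z₀).sub_const z₀
    have h2 := h1.norm_sq
    have h3 : HasFDerivAt (fun z : E => ‖z - z₀‖^2) (0 : E →L[ℝ] ℝ) z₀ := by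
      convert h2 using 1
      ext w
      simp
    exact h3.fderiv

/-- `v` (time variable first) is a pathwise viscosity subsolution of the stochastic HJB
equation `dv = −√ν ∇v ∘ dW(s) + (V(x) − ‖∇v‖²/2) ds` with terminal data `S`: `v` is upper
semicontinuous and bounded above, `v(T,·) ≤ S`, and whenever `φ ∈ C²_b`, `g ∈ C¹` and
`v − Φ_φ − g` (with `Φ_φ(s,x) = φ(x + √ν(W(T) − W(s)))`) attains a local maximum at
`(s₀,x₀) ∈ (0,T) × ℝⁿ`, then `−g′(s₀) ≤ V(x₀) − ‖∇φ(x₀ + √ν(W(T) − W(s₀)))‖²/2`. -/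
def IsPathwiseSubsolution {n : ℕ} (T ν : ℝ) (W : ℝ → EuclideanSpace ℝ (Fin n))
    (V S : EuclideanSpace ℝ (Fin n) → ℝ) (v : ℝ → EuclideanSpace ℝ (Fin n) → ℝ) : Prop :=
  UpperSemicontinuous (fun p : ℝ × EuclideanSpace ℝ (Fin n) => v p.1 p.2) ∧
  (∃ M : ℝ, ∀ s y, v s y ≤ M) ∧
  (∀ y, v T y ≤ S y) ∧
  (∀ (φ : EuclideanSpace ℝ (Fin n) → ℝ) (g : ℝ → ℝ) (s₀ : ℝ) (x₀ : EuclideanSpace ℝ (Fin n)),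
    IsC2b φ → ContDiff ℝ 1 g → s₀ ∈ Ioo (0 : ℝ) T →
    IsLocalMax (fun p : ℝ × EuclideanSpace ℝ (Fin n) =>
      v p.1 p.2 - φ (p.2 + Real.sqrt ν • (W T - W p.1)) - g p.1) (s₀, x₀) →
    -deriv g s₀ ≤ V x₀ - ‖gradient φ (x₀ + Real.sqrt ν • (W T - W s₀))‖ ^ 2 / 2)

/-- `v` (time variable first) is a pathwise viscosity supersolution of the stochastic HJB
equation `dv = −√ν ∇v ∘ dW(s) + (V(x) − ‖∇v‖²/2) ds` with terminal data `S`: defined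
symmetrically to `IsPathwiseSubsolution`. -/
def IsPathwiseSupersolution {n : ℕ} (T ν : ℝ) (W : ℝ → EuclideanSpace ℝ (Fin n))
    (V S : EuclideanSpace ℝ (Fin n) → ℝ) (v : ℝ → EuclideanSpace ℝ (Fin n) → ℝ) : Prop :=
  LowerSemicontinuous (fun p : ℝ × EuclideanSpace ℝ (Fin n) => v p.1 p.2) ∧
  (∃ m : ℝ, ∀ s y, m ≤ v s y) ∧
  (∀ y, S y ≤ v T y) ∧
  (∀ (φ : EuclideanSpace ℝ (Fin n) → ℝ) (g : ℝ → ℝ) (s₀ : ℝ) (x₀ : EuclideanSpace ℝ (Fin n)),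
    IsC2b φ → ContDiff ℝ 1 g → s₀ ∈ Ioo (0 : ℝ) T →
    IsLocalMin (fun p : ℝ × EuclideanSpace ℝ (Fin n) =>
      v p.1 p.2 - φ (p.2 + Real.sqrt ν • (W T - W p.1)) - g p.1) (s₀, x₀) →
    V x₀ - ‖gradient φ (x₀ + Real.sqrt ν • (W T - W s₀))‖ ^ 2 / 2 ≤ -deriv g s₀)

/-- doubling of variables: if `u` is a pathwise viscosity subsolution and `v`
a pathwise viscosity supersolution, then `w(x,y,s) := u(x,s) − v(y,s)` is a viscosity
subsolution of the doubled equation on `B_R(0) × B_R(0) × (0,T)`: whenever `ψ ∈ C²_b` on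
`ℝⁿ × ℝⁿ`, `g ∈ C¹`, and `w − Ψ_ψ − g` (with
`Ψ_ψ(x,y,s) = ψ(x + √ν(W(T) − W(s)), y + √ν(W(T) − W(s)))`) attains a local maximum at
`(x₀,y₀,s₀) ∈ B_R(0) × B_R(0) × (0,T)`, then
`−g′(s₀) ≤ V(x₀) − V(y₀) − (‖∇_x Ψ_ψ(x₀,y₀,s₀)‖² − ‖∇_y Ψ_ψ(x₀,y₀,s₀)‖²)/2`. -/
theorem statement11
    (n : ℕ) (hn : 1 ≤ n) (T ν : ℝ)
    (hT : 0 < T) (hν : 0 < ν)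
    (W : ℝ → EuclideanSpace ℝ (Fin n)) (hW : ContinuousOn W (Icc 0 T))
    (V S : EuclideanSpace ℝ (Fin n) → ℝ) (L_V L_S Vbound Sbound : ℝ)
    (hVlip : ∀ y y', |V y - V y'| ≤ L_V * ‖y - y'‖)
    (hVbdd : ∀ y, |V y| ≤ Vbound)
    (hSlip : ∀ y y', |S y - S y'| ≤ L_S * ‖y - y'‖)
    (hSbdd : ∀ y, |S y| ≤ Sbound)
    (u v : ℝ → EuclideanSpace ℝ (Fin n) → ℝ)
    (hu : IsPathwiseSubsolution T ν W V S u)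
    (hv : IsPathwiseSupersolution T ν W V S v)
    (R : ℝ) (hR : 0 < R) :
    ∀ (ψ : EuclideanSpace ℝ (Fin n) × EuclideanSpace ℝ (Fin n) → ℝ) (g : ℝ → ℝ)
      (x₀ y₀ : EuclideanSpace ℝ (Fin n)) (s₀ : ℝ),
      IsC2b ψ → ContDiff ℝ 1 g →
      x₀ ∈ Metric.ball (0 : EuclideanSpace ℝ (Fin n)) R →
      y₀ ∈ Metric.ball (0 : EuclideanSpace ℝ (Fin n)) R →
      s₀ ∈ Ioo (0 : ℝ) T →
      IsLocalMax (fun p : EuclideanSpace ℝ (Fin n) × EuclideanSpace ℝ (Fin n) × ℝ =>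
        u p.2.2 p.1 - v p.2.2 p.2.1 -
          ψ (p.1 + Real.sqrt ν • (W T - W p.2.2), p.2.1 + Real.sqrt ν • (W T - W p.2.2)) -
          g p.2.2) (x₀, y₀, s₀) →
      -deriv g s₀ ≤ V x₀ - V y₀ -
        (‖gradient (fun x => ψ (x + Real.sqrt ν • (W T - W s₀),
            y₀ + Real.sqrt ν • (W T - W s₀))) x₀‖ ^ 2 -
         ‖gradient (fun y => ψ (x₀ + Real.sqrt ν • (W T - W s₀),
            y + Real.sqrt ν • (W T - W s₀))) y₀‖ ^ 2) / 2 := by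
  classical
  intro ψ g x₀ y₀ s₀ hψC hgC _hx₀R _hy₀R hs₀ hmax
  obtain ⟨hs₀0, hs₀T⟩ := hs₀
  obtain ⟨huUSC, ⟨Mu, hMu⟩, _, huTest⟩ := hu
  obtain ⟨hvLSC, ⟨mv, hmv⟩, _, hvTest⟩ := hv
  set Δ : ℝ → EuclideanSpace ℝ (Fin n) := fun t => Real.sqrt ν • (W T - W t) with hΔdef
  have hspell : ∀ t : ℝ, Real.sqrt ν • (W T - W t) = Δ t := fun _ => rfl
  simp only [hspell]
  -- radius of the local max
  obtain ⟨δ, hδpos, hδ⟩ := Metric.eventually_nhds_iff.1 hmax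
  set r : ℝ := min (δ/2) (min (s₀/2) ((T - s₀)/2)) with hrdef
  have hrpos : 0 < r := lt_min (by linarith) (lt_min (by linarith) (by linarith))
  have hrδ : r < δ := lt_of_le_of_lt (min_le_left _ _) (by linarith)
  have hrs₀ : r ≤ s₀/2 := le_trans (min_le_right _ _) (min_le_left _ _)
  have hrT : r ≤ (T - s₀)/2 := le_trans (min_le_right _ _) (min_le_right _ _)
  set a : ℝ := s₀ - r with hadef
  set b : ℝ := s₀ + r with hbdef
  have habsub : Icc a b ⊆ Ioo 0 T := by
    intro t ht
    obtain ⟨ht1, ht2⟩ := ht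
    constructor
    · rw [hadef] at ht1; linarith
    · rw [hbdef] at ht2; linarith
  have hs₀ab : s₀ ∈ Icc a b := ⟨by rw [hadef]; linarith, by rw [hbdef]; linarith⟩
  -- continuity of the path shift on [a,b]
  have hΔat : ∀ t ∈ Icc a b, ContinuousAt Δ t := by
    intro t ht
    have h1 : ContinuousAt W t := hW.continuousAt (Icc_mem_nhds (habsub ht).1 (habsub ht).2)
    exact (continuousAt_const.sub h1).const_smul (Real.sqrt ν)
  obtain ⟨B, hB⟩ := isCompact_Icc.exists_bound_of_continuousOn
    (fun t ht => (hΔat t ht).continuousWithinAt : ContinuousOn Δ (Icc a b))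
  have hB0 : 0 ≤ B := le_trans (norm_nonneg _) (hB s₀ hs₀ab)
  set z₀ : EuclideanSpace ℝ (Fin n) := x₀ + Δ s₀ with hz₀def
  set z₁ : EuclideanSpace ℝ (Fin n) := y₀ + Δ s₀ with hz₁def
  set ρ : ℝ := r + 2*B + 1 with hρdef
  have hρpos : 0 < ρ := by rw [hρdef]; linarith
  obtain ⟨px, hpx2, hpxsupp, hpxnn, hpxz₀, hpxzero, hpxfd⟩ := exists_penalty z₀ ρ hρpos
  obtain ⟨py, hpy2, hpysupp, hpynn, hpyz₁, hpyzero, hpyfd⟩ := exists_penalty z₁ ρ hρpos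
  have hpxC2b : IsC2b px := isC2b_of_compactSupport hpx2 hpxsupp
  have hpyC2b : IsC2b py := isC2b_of_compactSupport hpy2 hpysupp
  -- frame containment
  have hframe : ∀ x' : EuclideanSpace ℝ (Fin n), ∀ c : EuclideanSpace ℝ (Fin n), ∀ t ∈ Icc a b,
      ‖x' - c‖ ≤ r → ‖(x' + Δ t) - (c + Δ s₀)‖ < ρ := by
    intro x' c t ht hx'
    have heq : (x' + Δ t) - (c + Δ s₀) = (x' - c) + (Δ t - Δ s₀) := by abel
    rw [heq]
    calc ‖(x' - c) + (Δ t - Δ s₀)‖ ≤ ‖x' - c‖ + (‖Δ t‖ + ‖Δ s₀‖) :=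
          le_trans (norm_add_le _ _) (by gcongr; exact norm_sub_le _ _)
      _ ≤ r + (B + B) := by gcongr; exacts [hB t ht, hB s₀ hs₀ab]
      _ < ρ := by rw [hρdef]; linarith
  -- the compact domain
  set Dom : Set ((ℝ × EuclideanSpace ℝ (Fin n)) × (ℝ × EuclideanSpace ℝ (Fin n))) :=
    (Icc a b ×ˢ Metric.closedBall x₀ r) ×ˢ (Icc a b ×ˢ Metric.closedBall y₀ r) with hDomdef
  have hDomC : IsCompact Dom :=
    (isCompact_Icc.prod (isCompact_closedBall _ _)).prod
      (isCompact_Icc.prod (isCompact_closedBall _ _))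
  set q₀ : (ℝ × EuclideanSpace ℝ (Fin n)) × (ℝ × EuclideanSpace ℝ (Fin n)) :=
    ((s₀, x₀), (s₀, y₀)) with hq₀def
  have hq₀Dom : q₀ ∈ Dom :=
    ⟨⟨hs₀ab, Metric.mem_closedBall_self hrpos.le⟩, hs₀ab, Metric.mem_closedBall_self hrpos.le⟩
  obtain ⟨κ, hκdef⟩ : ∃ κ' : ℕ → ℝ, κ' = fun j : ℕ => (j : ℝ) + 1 := ⟨_, rfl⟩
  have hκpos : ∀ j, 0 < κ j := fun j => by rw [hκdef]; positivity
  obtain ⟨Θ, hΘdef⟩ : ∃ Θ' : ℕ → ((ℝ × EuclideanSpace ℝ (Fin n)) × (ℝ × EuclideanSpace ℝ (Fin n))) → ℝ,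
      Θ' = fun j q => u q.1.1 q.1.2 - v q.2.1 q.2.2 - ψ (q.1.2 + Δ q.1.1, q.2.2 + Δ q.2.1)
      - px (q.1.2 + Δ q.1.1) - py (q.2.2 + Δ q.2.1) - g q.1.1 - (q.1.1 - s₀)^2
      - κ j / 2 * (q.1.1 - q.2.1)^2 := ⟨_, rfl⟩
  obtain ⟨Mψ, hMψ⟩ := hψC.2
  obtain ⟨Cg, hCg⟩ := isCompact_Icc.exists_bound_of_continuousOn
    (hgC.continuous.continuousOn : ContinuousOn g (Icc a b))
  set C : ℝ := Mu - mv + Mψ + Cg with hCdef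
  have hCbound : ∀ j, ∀ q ∈ Dom, Θ j q + κ j / 2 * (q.1.1 - q.2.1)^2 ≤ C := by
    intro j q hq
    obtain ⟨⟨ht, _⟩, _, _⟩ := hq
    have h1 := hMu q.1.1 q.1.2
    have h2 := hmv q.2.1 q.2.2
    have h3 := abs_le.1 (hMψ (q.1.2 + Δ q.1.1, q.2.2 + Δ q.2.1)).1
    have h4 : |g q.1.1| ≤ Cg := by rw [← Real.norm_eq_abs]; exact hCg _ ht
    have h4' := abs_le.1 h4
    have h5 := hpxnn (q.1.2 + Δ q.1.1)
    have h6 := hpynn (q.2.2 + Δ q.2.1)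
    have h7 : (0:ℝ) ≤ (q.1.1 - s₀)^2 := sq_nonneg _
    simp only [hΘdef, hCdef]
    linarith [h3.1, h4'.1]
  set M₀ : ℝ := u s₀ x₀ - v s₀ y₀ - ψ (z₀, z₁) - g s₀ with hM₀def
  have hΘq₀ : ∀ j, Θ j q₀ = M₀ := by
    intro j
    simp only [hΘdef, hq₀def, hM₀def, ← hz₀def, ← hz₁def, hpxz₀, hpyz₁]
    ring
  -- upper semicontinuity of Θ j on Dom, and existence of maximisers
  have husc1 : UpperSemicontinuous
      (fun q : (ℝ × EuclideanSpace ℝ (Fin n)) × (ℝ × EuclideanSpace ℝ (Fin n)) =>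
        u q.1.1 q.1.2) := huUSC.comp_cont continuous_fst
  have husc2 : UpperSemicontinuous
      (fun q : (ℝ × EuclideanSpace ℝ (Fin n)) × (ℝ × EuclideanSpace ℝ (Fin n)) =>
        -(v q.2.1 q.2.2)) := by
    have h1 : UpperSemicontinuous
        (fun p : ℝ × EuclideanSpace ℝ (Fin n) => -(v p.1 p.2)) := by
      intro p c hc
      simp only at hc
      have h2 := hvLSC p (-c) (by linarith)
      exact h2.mono fun q hq => by show -(v q.1 q.2) < c; linarith
    exact h1.comp_cont continuous_snd
  have hcontPart : ∀ j, ContinuousOn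
      (fun q : (ℝ × EuclideanSpace ℝ (Fin n)) × (ℝ × EuclideanSpace ℝ (Fin n)) =>
        -(ψ (q.1.2 + Δ q.1.1, q.2.2 + Δ q.2.1) + px (q.1.2 + Δ q.1.1) + py (q.2.2 + Δ q.2.1)
          + g q.1.1 + (q.1.1 - s₀)^2 + κ j / 2 * (q.1.1 - q.2.1)^2)) Dom := by
    intro j q hq
    obtain ⟨⟨hqt, hqx⟩, hqs, hqy⟩ := hq
    apply ContinuousAt.continuousWithinAt
    have ht1 : ContinuousAt (fun q : (ℝ × EuclideanSpace ℝ (Fin n)) × (ℝ × EuclideanSpace ℝ (Fin n)) => q.1.1) q :=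
      (continuous_fst.comp continuous_fst).continuousAt
    have hs1 : ContinuousAt (fun q : (ℝ × EuclideanSpace ℝ (Fin n)) × (ℝ × EuclideanSpace ℝ (Fin n)) => q.2.1) q :=
      (continuous_fst.comp continuous_snd).continuousAt
    have hx1 : ContinuousAt (fun q : (ℝ × EuclideanSpace ℝ (Fin n)) × (ℝ × EuclideanSpace ℝ (Fin n)) => q.1.2) q :=
      (continuous_snd.comp continuous_fst).continuousAt
    have hy1 : ContinuousAt (fun q : (ℝ × EuclideanSpace ℝ (Fin n)) × (ℝ × EuclideanSpace ℝ (Fin n)) => q.2.2) q :=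
      (continuous_snd.comp continuous_snd).continuousAt
    have hΔ1 : ContinuousAt (fun q : (ℝ × EuclideanSpace ℝ (Fin n)) × (ℝ × EuclideanSpace ℝ (Fin n)) => Δ q.1.1) q :=
      ContinuousAt.comp (g := Δ) (f := fun q : (ℝ × EuclideanSpace ℝ (Fin n)) × (ℝ × EuclideanSpace ℝ (Fin n)) => q.1.1) (hΔat _ hqt) ht1
    have hΔ2 : ContinuousAt (fun q : (ℝ × EuclideanSpace ℝ (Fin n)) × (ℝ × EuclideanSpace ℝ (Fin n)) => Δ q.2.1) q :=
      ContinuousAt.comp (g := Δ) (f := fun q : (ℝ × EuclideanSpace ℝ (Fin n)) × (ℝ × EuclideanSpace ℝ (Fin n)) => q.2.1) (hΔat _ hqs) hs1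
    have hw1 := hx1.add hΔ1
    have hw2 := hy1.add hΔ2
    have hψc : ContinuousAt (fun q : (ℝ × EuclideanSpace ℝ (Fin n)) × (ℝ × EuclideanSpace ℝ (Fin n)) =>
        ψ (q.1.2 + Δ q.1.1, q.2.2 + Δ q.2.1)) q :=
      ContinuousAt.comp (g := ψ) (hψC.1.continuous.continuousAt) (hw1.prodMk hw2)
    have hpxc : ContinuousAt (fun q : (ℝ × EuclideanSpace ℝ (Fin n)) × (ℝ × EuclideanSpace ℝ (Fin n)) =>
        px (q.1.2 + Δ q.1.1)) q := ContinuousAt.comp (g := px) (hpx2.continuous.continuousAt) hw1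
    have hpyc : ContinuousAt (fun q : (ℝ × EuclideanSpace ℝ (Fin n)) × (ℝ × EuclideanSpace ℝ (Fin n)) =>
        py (q.2.2 + Δ q.2.1)) q := ContinuousAt.comp (g := py) (hpy2.continuous.continuousAt) hw2
    have hgc : ContinuousAt (fun q : (ℝ × EuclideanSpace ℝ (Fin n)) × (ℝ × EuclideanSpace ℝ (Fin n)) =>
        g q.1.1) q := ContinuousAt.comp (g := g) (f := fun q : (ℝ × EuclideanSpace ℝ (Fin n)) × (ℝ × EuclideanSpace ℝ (Fin n)) => q.1.1) (hgC.continuous.continuousAt) ht1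
    exact ((((hψc.add hpxc).add hpyc).add hgc).add
      (((ht1.sub continuousAt_const).pow 2))).add
      ((continuousAt_const.mul ((ht1.sub hs1).pow 2)))  |>.neg
  have hΘusc : ∀ j, UpperSemicontinuousOn (Θ j) Dom := by
    intro j
    have heq : Θ j = fun q => (u q.1.1 q.1.2 + -(v q.2.1 q.2.2)) +
        -(ψ (q.1.2 + Δ q.1.1, q.2.2 + Δ q.2.1) + px (q.1.2 + Δ q.1.1) + py (q.2.2 + Δ q.2.1)
          + g q.1.1 + (q.1.1 - s₀)^2 + κ j / 2 * (q.1.1 - q.2.1)^2) := by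
      funext q
      simp only [hΘdef]
      ring
    rw [heq]
    exact ((husc1.add husc2).upperSemicontinuousOn Dom).add
      ((hcontPart j).upperSemicontinuousOn)
  have hmaxex : ∀ j, ∃ p ∈ Dom, ∀ q ∈ Dom, Θ j q ≤ Θ j p := by
    intro j
    refine usc_exists_max hDomC ⟨q₀, hq₀Dom⟩ (hΘusc j) ⟨C, fun q hq => ?_⟩
    have h1 := hCbound j q hq
    have h2 : 0 ≤ κ j / 2 * (q.1.1 - q.2.1)^2 :=
      mul_nonneg (by have := hκpos j; linarith) (sq_nonneg _)
    linarith
  choose P hPDom hPmax using hmaxex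
  have hM₀le : ∀ j, M₀ ≤ Θ j (P j) := fun j => (hΘq₀ j) ▸ hPmax j q₀ hq₀Dom
  have hgapj : ∀ j, κ j / 2 * ((P j).1.1 - (P j).2.1)^2 ≤ C - M₀ := by
    intro j
    have h1 := hCbound j (P j) (hPDom j)
    have h2 := hM₀le j
    linarith
  -- convergence of the maximisers to q₀
  have hPlim : Tendsto P atTop (𝓝 q₀) := by
    apply tendsto_of_subseq_tendsto
    intro ns hns
    obtain ⟨qbar, hqbarDom, ms, hmsmono, hsub⟩ := hDomC.tendsto_subseq (fun m => hPDom (ns m))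
    refine ⟨ms, ?_⟩
    suffices hqeq : qbar = q₀ by rw [← hqeq]; exact hsub
    obtain ⟨⟨hbt, hbx⟩, hbs, hby⟩ := hqbarDom
    have hφtop : Tendsto (fun m => ns (ms m)) atTop atTop := hns.comp hmsmono.tendsto_atTop
    have hseq : Tendsto (fun m => P (ns (ms m))) atTop (𝓝 qbar) := hsub
    have htc : Tendsto (fun m => (P (ns (ms m))).1.1) atTop (𝓝 qbar.1.1) :=
      ((continuous_fst.comp continuous_fst).tendsto qbar).comp hseq
    have hsc : Tendsto (fun m => (P (ns (ms m))).2.1) atTop (𝓝 qbar.2.1) :=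
      ((continuous_fst.comp continuous_snd).tendsto qbar).comp hseq
    have hxc : Tendsto (fun m => (P (ns (ms m))).1.2) atTop (𝓝 qbar.1.2) :=
      ((continuous_snd.comp continuous_fst).tendsto qbar).comp hseq
    have hyc : Tendsto (fun m => (P (ns (ms m))).2.2) atTop (𝓝 qbar.2.2) :=
      ((continuous_snd.comp continuous_snd).tendsto qbar).comp hseq
    -- (i) the two time variables coincide in the limit
    have htseq : qbar.1.1 = qbar.2.1 := by
      have hd2 : Tendsto (fun m => ((P (ns (ms m))).1.1 - (P (ns (ms m))).2.1)^2) atTop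
          (𝓝 ((qbar.1.1 - qbar.2.1)^2)) := (htc.sub hsc).pow 2
      have hub : ∀ m, ((P (ns (ms m))).1.1 - (P (ns (ms m))).2.1)^2
          ≤ 2*(C - M₀)/κ (ns (ms m)) := by
        intro m
        have h1 := hgapj (ns (ms m))
        have hk := hκpos (ns (ms m))
        rw [le_div_iff₀ hk]
        nlinarith
      have hubκ : Tendsto (fun m => 2*(C - M₀)/κ (ns (ms m))) atTop (𝓝 0) := by
        apply Tendsto.div_atTop (tendsto_const_nhds)
        refine Filter.Tendsto.comp ?_ hφtop
        rw [hκdef]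
        exact tendsto_atTop_add_const_right _ 1 tendsto_natCast_atTop_atTop
      have hle0 : (qbar.1.1 - qbar.2.1)^2 ≤ 0 := le_of_tendsto_of_tendsto' hd2 hubκ hub
      have h0 : (qbar.1.1 - qbar.2.1)^2 = 0 := le_antisymm hle0 (sq_nonneg _)
      have h1 : qbar.1.1 - qbar.2.1 = 0 := pow_eq_zero_iff (n := 2) (by norm_num) |>.1 h0
      linarith
    -- (ii) limit of the continuous part, and the key upper bound
    have hΔtc : Tendsto (fun m => Δ ((P (ns (ms m))).1.1)) atTop (𝓝 (Δ qbar.1.1)) :=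
      Filter.Tendsto.comp (g := Δ) (hΔat _ hbt) htc
    have hΔsc : Tendsto (fun m => Δ ((P (ns (ms m))).2.1)) atTop (𝓝 (Δ qbar.2.1)) :=
      Filter.Tendsto.comp (g := Δ) (hΔat _ hbs) hsc
    have hw1c : Tendsto (fun m => (P (ns (ms m))).1.2 + Δ ((P (ns (ms m))).1.1)) atTop
        (𝓝 (qbar.1.2 + Δ qbar.1.1)) := hxc.add hΔtc
    have hw2c : Tendsto (fun m => (P (ns (ms m))).2.2 + Δ ((P (ns (ms m))).2.1)) atTop
        (𝓝 (qbar.2.2 + Δ qbar.2.1)) := hyc.add hΔsc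
    have hψcc : Tendsto (fun m => ψ ((P (ns (ms m))).1.2 + Δ ((P (ns (ms m))).1.1),
        (P (ns (ms m))).2.2 + Δ ((P (ns (ms m))).2.1))) atTop
        (𝓝 (ψ (qbar.1.2 + Δ qbar.1.1, qbar.2.2 + Δ qbar.2.1))) :=
      (hψC.1.continuous.tendsto _).comp (hw1c.prodMk_nhds hw2c)
    have hpxcc : Tendsto (fun m => px ((P (ns (ms m))).1.2 + Δ ((P (ns (ms m))).1.1))) atTop
        (𝓝 (px (qbar.1.2 + Δ qbar.1.1))) := (hpx2.continuous.tendsto _).comp hw1c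
    have hpycc : Tendsto (fun m => py ((P (ns (ms m))).2.2 + Δ ((P (ns (ms m))).2.1))) atTop
        (𝓝 (py (qbar.2.2 + Δ qbar.2.1))) := (hpy2.continuous.tendsto _).comp hw2c
    have hgcc : Tendsto (fun m => g ((P (ns (ms m))).1.1)) atTop (𝓝 (g qbar.1.1)) :=
      (hgC.continuous.tendsto _).comp htc
    have hsqc : Tendsto (fun m => ((P (ns (ms m))).1.1 - s₀)^2) atTop
        (𝓝 ((qbar.1.1 - s₀)^2)) := (htc.sub_const s₀).pow 2
    obtain ⟨Q, hQdef⟩ : ∃ Q' : ℝ, Q' = ψ (qbar.1.2 + Δ qbar.1.1, qbar.2.2 + Δ qbar.2.1)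
        + px (qbar.1.2 + Δ qbar.1.1) + py (qbar.2.2 + Δ qbar.2.1) + g qbar.1.1
        + (qbar.1.1 - s₀)^2 := ⟨_, rfl⟩
    have hkey : M₀ + Q ≤ u qbar.1.1 qbar.1.2 - v qbar.2.1 qbar.2.2 := by
      by_contra hcon
      push_neg at hcon
      obtain ⟨η, hηdef⟩ : ∃ η' : ℝ,
          η' = (M₀ + Q - (u qbar.1.1 qbar.1.2 - v qbar.2.1 qbar.2.2))/4 := ⟨_, rfl⟩
      have hη0 : 0 < η := by rw [hηdef]; linarith
      have hev1 : ∀ᶠ m in atTop,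
          u (P (ns (ms m))).1.1 (P (ns (ms m))).1.2 < u qbar.1.1 qbar.1.2 + η := by
        have h1 := huUSC qbar.1 (u qbar.1.1 qbar.1.2 + η) (by linarith)
        have h2 : Tendsto (fun m => (P (ns (ms m))).1) atTop (𝓝 qbar.1) :=
          (continuous_fst.tendsto qbar).comp hseq
        exact h2.eventually h1
      have hev2 : ∀ᶠ m in atTop,
          v qbar.2.1 qbar.2.2 - η < v (P (ns (ms m))).2.1 (P (ns (ms m))).2.2 := by
        have h1 := hvLSC qbar.2 (v qbar.2.1 qbar.2.2 - η) (by linarith)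
        have h2 : Tendsto (fun m => (P (ns (ms m))).2) atTop (𝓝 qbar.2) :=
          (continuous_snd.tendsto qbar).comp hseq
        exact h2.eventually h1
      have hev3 : ∀ᶠ m in atTop,
          ψ ((P (ns (ms m))).1.2 + Δ ((P (ns (ms m))).1.1),
            (P (ns (ms m))).2.2 + Δ ((P (ns (ms m))).2.1))
          + px ((P (ns (ms m))).1.2 + Δ ((P (ns (ms m))).1.1))
          + py ((P (ns (ms m))).2.2 + Δ ((P (ns (ms m))).2.1))
          + g ((P (ns (ms m))).1.1) + (((P (ns (ms m))).1.1 - s₀))^2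
          ≤ (u qbar.1.1 qbar.1.2 + η) - (v qbar.2.1 qbar.2.2 - η) - M₀ := by
        filter_upwards [hev1, hev2] with m h1 h2
        have h3 := hM₀le (ns (ms m))
        simp only [hΘdef] at h3
        have h4 : 0 ≤ κ (ns (ms m))/2 * ((P (ns (ms m))).1.1 - (P (ns (ms m))).2.1)^2 :=
          mul_nonneg (by have := hκpos (ns (ms m)); linarith) (sq_nonneg _)
        linarith
      have hQc : Tendsto (fun m =>
          ψ ((P (ns (ms m))).1.2 + Δ ((P (ns (ms m))).1.1),
            (P (ns (ms m))).2.2 + Δ ((P (ns (ms m))).2.1))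
          + px ((P (ns (ms m))).1.2 + Δ ((P (ns (ms m))).1.1))
          + py ((P (ns (ms m))).2.2 + Δ ((P (ns (ms m))).2.1))
          + g ((P (ns (ms m))).1.1) + (((P (ns (ms m))).1.1 - s₀))^2) atTop (𝓝 Q) := by
        rw [hQdef]
        exact (((hψcc.add hpxcc).add hpycc).add hgcc).add hsqc
      have hQle : Q ≤ (u qbar.1.1 qbar.1.2 + η) - (v qbar.2.1 qbar.2.2 - η) - M₀ :=
        le_of_tendsto hQc hev3
      rw [hηdef] at hQle
      linarith
    -- (iii) the local maximum property pins down qbar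
    rw [← htseq] at hkey
    have hnormx : ‖qbar.1.2 - x₀‖ ≤ r := by
      have := Metric.mem_closedBall.1 hbx; rwa [dist_eq_norm] at this
    have hnormy : ‖qbar.2.2 - y₀‖ ≤ r := by
      have := Metric.mem_closedBall.1 hby; rwa [dist_eq_norm] at this
    have habst : |qbar.1.1 - s₀| ≤ r := by
      rw [abs_le]
      obtain ⟨h1, h2⟩ := hbt
      rw [hadef] at h1; rw [hbdef] at h2
      constructor <;> linarith
    have hdist : dist ((qbar.1.2, qbar.2.2, qbar.1.1) :
        EuclideanSpace ℝ (Fin n) × EuclideanSpace ℝ (Fin n) × ℝ) (x₀, y₀, s₀) < δ := by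
      rw [Prod.dist_eq, Prod.dist_eq]
      have d1 : dist qbar.1.2 x₀ ≤ r := Metric.mem_closedBall.1 hbx
      have d2 : dist qbar.2.2 y₀ ≤ r := Metric.mem_closedBall.1 hby
      have d3 : dist qbar.1.1 s₀ ≤ r := by rw [Real.dist_eq]; exact habst
      simp only [Prod.fst, Prod.snd]
      exact max_lt (lt_of_le_of_lt d1 hrδ)
        (max_lt (lt_of_le_of_lt d2 hrδ) (lt_of_le_of_lt d3 hrδ))
    have hFle : u qbar.1.1 qbar.1.2 - v qbar.1.1 qbar.2.2
        - ψ (qbar.1.2 + Δ qbar.1.1, qbar.2.2 + Δ qbar.1.1) - g qbar.1.1 ≤ M₀ := by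
      have h5 := hδ hdist
      simp only [hspell] at h5
      rw [hM₀def, hz₀def, hz₁def]
      exact h5
    have hQform : Q = ψ (qbar.1.2 + Δ qbar.1.1, qbar.2.2 + Δ qbar.1.1)
        + px (qbar.1.2 + Δ qbar.1.1) + py (qbar.2.2 + Δ qbar.1.1) + g qbar.1.1
        + (qbar.1.1 - s₀)^2 := by rw [hQdef, htseq]
    have p1 := hpxnn (qbar.1.2 + Δ qbar.1.1)
    have p2 := hpynn (qbar.2.2 + Δ qbar.1.1)
    have p3 := sq_nonneg (qbar.1.1 - s₀)
    have hsum0 : px (qbar.1.2 + Δ qbar.1.1) = 0 ∧ py (qbar.2.2 + Δ qbar.1.1) = 0 ∧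
        (qbar.1.1 - s₀)^2 = 0 := by
      rw [hQform] at hkey
      refine ⟨le_antisymm (by linarith) p1, le_antisymm (by linarith) p2,
        le_antisymm (by linarith) p3⟩
    have hts₀ : qbar.1.1 = s₀ := by
      have := pow_eq_zero_iff (n := 2) (by norm_num) |>.1 hsum0.2.2
      linarith
    have hxeq : qbar.1.2 = x₀ := by
      have h7 : qbar.1.2 + Δ qbar.1.1 = z₀ := by
        refine hpxzero _ ?_ hsum0.1
        rw [hz₀def]
        exact hframe qbar.1.2 x₀ qbar.1.1 hbt hnormx
      rw [hts₀, hz₀def] at h7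
      exact add_right_cancel h7
    have hyeq : qbar.2.2 = y₀ := by
      have h7 : qbar.2.2 + Δ qbar.1.1 = z₁ := by
        refine hpyzero _ ?_ hsum0.2.1
        rw [hz₁def]
        exact hframe qbar.2.2 y₀ qbar.1.1 hbt hnormy
      rw [hts₀, hz₁def] at h7
      exact add_right_cancel h7
    have hseq₀ : qbar.2.1 = s₀ := by rw [← htseq]; exact hts₀
    rw [hq₀def]
    exact Prod.ext (Prod.ext hts₀ hxeq) (Prod.ext hseq₀ hyeq)
  -- eventually the maximiser is interior
  have hU : ∀ᶠ j in atTop, (P j).1.1 ∈ Ioo a b ∧ (P j).1.2 ∈ Metric.ball x₀ r ∧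
      (P j).2.1 ∈ Ioo a b ∧ (P j).2.2 ∈ Metric.ball y₀ r := by
    have hUopen : IsOpen ((Ioo a b ×ˢ Metric.ball x₀ r) ×ˢ (Ioo a b ×ˢ Metric.ball y₀ r)) :=
      (isOpen_Ioo.prod Metric.isOpen_ball).prod (isOpen_Ioo.prod Metric.isOpen_ball)
    have hs₀Ioo : s₀ ∈ Ioo a b := by
      constructor
      · rw [hadef]; linarith
      · rw [hbdef]; linarith
    have hq₀U : q₀ ∈ (Ioo a b ×ˢ Metric.ball x₀ r) ×ˢ (Ioo a b ×ˢ Metric.ball y₀ r) := by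
      rw [hq₀def]
      exact ⟨⟨hs₀Ioo, Metric.mem_ball_self hrpos⟩, hs₀Ioo, Metric.mem_ball_self hrpos⟩
    have h1 := hPlim.eventually (hUopen.mem_nhds hq₀U)
    exact h1.mono fun j hj => by
      obtain ⟨⟨h1, h2⟩, h3, h4⟩ := hj
      exact ⟨h1, h2, h3, h4⟩
  have hinlnorm : ‖ContinuousLinearMap.inl ℝ (EuclideanSpace ℝ (Fin n))
      (EuclideanSpace ℝ (Fin n))‖ ≤ 1 := by
    refine ContinuousLinearMap.opNorm_le_bound _ zero_le_one fun z => ?_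
    rw [one_mul, ContinuousLinearMap.inl_apply, Prod.norm_def]
    simp
  have hinrnorm : ‖ContinuousLinearMap.inr ℝ (EuclideanSpace ℝ (Fin n))
      (EuclideanSpace ℝ (Fin n))‖ ≤ 1 := by
    refine ContinuousLinearMap.opNorm_le_bound _ zero_le_one fun z => ?_
    rw [one_mul, ContinuousLinearMap.inr_apply, Prod.norm_def]
    simp
  obtain ⟨Aseq, hAdef⟩ : ∃ A' : ℕ → (EuclideanSpace ℝ (Fin n) →L[ℝ] ℝ),
      A' = fun j => (fderiv ℝ ψ ((P j).1.2 + Δ ((P j).1.1), (P j).2.2 + Δ ((P j).2.1))).comp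
          (ContinuousLinearMap.inl ℝ (EuclideanSpace ℝ (Fin n)) (EuclideanSpace ℝ (Fin n)))
        + fderiv ℝ px ((P j).1.2 + Δ ((P j).1.1)) := ⟨_, rfl⟩
  obtain ⟨Bseq, hBdef⟩ : ∃ B' : ℕ → (EuclideanSpace ℝ (Fin n) →L[ℝ] ℝ),
      B' = fun j => (fderiv ℝ ψ ((P j).1.2 + Δ ((P j).1.1), (P j).2.2 + Δ ((P j).2.1))).comp
          (ContinuousLinearMap.inr ℝ (EuclideanSpace ℝ (Fin n)) (EuclideanSpace ℝ (Fin n)))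
        + fderiv ℝ py ((P j).2.2 + Δ ((P j).2.1)) := ⟨_, rfl⟩
  have hψdiff : Differentiable ℝ ψ := hψC.1.differentiable two_ne_zero
  have hIneq : ∀ᶠ j in atTop, -deriv g ((P j).1.1) - 2*((P j).1.1 - s₀)
      ≤ V ((P j).1.2) - V ((P j).2.2) - (‖Aseq j‖^2 - ‖Bseq j‖^2)/2 := by
    filter_upwards [hU] with j hj
    obtain ⟨htj, hxj, hsj, hyj⟩ := hj
    obtain ⟨⟨hPt, hPx⟩, hPs, hPy⟩ := hPDom j
    -- the subsolution test at ((P j).1.1, (P j).1.2)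
    have hφ1C2b : IsC2b (fun z => ψ (z, (P j).2.2 + Δ ((P j).2.1)) + px z) := by
      refine isC2b_add ?_ hpxC2b
      have h1 := isC2b_comp_affine hψC
        (ContinuousLinearMap.inl ℝ (EuclideanSpace ℝ (Fin n)) (EuclideanSpace ℝ (Fin n)))
        hinlnorm ((0 : EuclideanSpace ℝ (Fin n)), (P j).2.2 + Δ ((P j).2.1))
      simpa only [ContinuousLinearMap.inl_apply, Prod.mk_add_mk, add_zero, zero_add] using h1
    have hg1C : ContDiff ℝ 1 (fun t : ℝ => g t + (t - s₀)^2 + κ j/2*(t - (P j).2.1)^2) :=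
      (hgC.add ((contDiff_id.sub contDiff_const).pow 2)).add
        (contDiff_const.mul ((contDiff_id.sub contDiff_const).pow 2))
    have hlmax : IsLocalMax (fun p : ℝ × EuclideanSpace ℝ (Fin n) =>
        u p.1 p.2 - (ψ (p.2 + Δ p.1, (P j).2.2 + Δ ((P j).2.1)) + px (p.2 + Δ p.1))
          - (g p.1 + (p.1 - s₀)^2 + κ j/2*(p.1 - (P j).2.1)^2)) ((P j).1.1, (P j).1.2) := by
      have hUo : IsOpen (Ioo a b ×ˢ Metric.ball x₀ r) := isOpen_Ioo.prod Metric.isOpen_ball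
      have hmem : ((P j).1.1, (P j).1.2) ∈ Ioo a b ×ˢ Metric.ball x₀ r := ⟨htj, hxj⟩
      filter_upwards [hUo.mem_nhds hmem] with p hp
      obtain ⟨hp1, hp2⟩ := hp
      have hpD : ((p.1, p.2), ((P j).2.1, (P j).2.2)) ∈ Dom := by
        rw [hDomdef]
        exact ⟨⟨Ioo_subset_Icc_self hp1, Metric.ball_subset_closedBall hp2⟩, hPs, hPy⟩
      have h1 := hPmax j ((p.1, p.2), ((P j).2.1, (P j).2.2)) hpD
      simp only [hΘdef] at h1
      have hgoal : u p.1 p.2 - (ψ (p.2 + Δ p.1, (P j).2.2 + Δ ((P j).2.1)) + px (p.2 + Δ p.1))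
          - (g p.1 + (p.1 - s₀)^2 + κ j/2*(p.1 - (P j).2.1)^2)
          ≤ u ((P j).1.1) ((P j).1.2)
            - (ψ (((P j).1.2) + Δ ((P j).1.1), (P j).2.2 + Δ ((P j).2.1))
              + px (((P j).1.2) + Δ ((P j).1.1)))
          - (g ((P j).1.1) + (((P j).1.1) - s₀)^2 + κ j/2*(((P j).1.1) - (P j).2.1)^2) := by
        linarith
      exact hgoal
    have hsub := huTest (fun z => ψ (z, (P j).2.2 + Δ ((P j).2.1)) + px z)
      (fun t : ℝ => g t + (t - s₀)^2 + κ j/2*(t - (P j).2.1)^2) ((P j).1.1) ((P j).1.2)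
      hφ1C2b hg1C (habsub (Ioo_subset_Icc_self htj)) hlmax
    have hg1d : deriv (fun t : ℝ => g t + (t - s₀)^2 + κ j/2*(t - (P j).2.1)^2) ((P j).1.1)
        = deriv g ((P j).1.1) + 2*((P j).1.1 - s₀) + κ j*((P j).1.1 - (P j).2.1) := by
      have h1 : HasDerivAt g (deriv g ((P j).1.1)) ((P j).1.1) :=
        ((hgC.differentiable one_ne_zero) ((P j).1.1)).hasDerivAt
      have h2 : HasDerivAt (fun t : ℝ => (t - s₀)^2) (2*((P j).1.1 - s₀)) ((P j).1.1) := by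
        simpa using ((hasDerivAt_id ((P j).1.1)).sub_const s₀).fun_pow 2
      have h3 : HasDerivAt (fun t : ℝ => κ j/2*(t - (P j).2.1)^2)
          (κ j*((P j).1.1 - (P j).2.1)) ((P j).1.1) := by
        have h5 : HasDerivAt (fun t : ℝ => (t - (P j).2.1)^2) (2*((P j).1.1 - (P j).2.1)) ((P j).1.1) := by
          simpa using ((hasDerivAt_id ((P j).1.1)).sub_const ((P j).2.1)).fun_pow 2
        have h4 := h5.const_mul (κ j/2)
        have h6 : κ j*((P j).1.1 - (P j).2.1) = κ j/2 * (2*((P j).1.1 - (P j).2.1)) := by ring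
        rw [h6]
        exact h4
      exact ((h1.add h2).add h3).deriv
    have hgrad1 : ‖gradient (fun z => ψ (z, (P j).2.2 + Δ ((P j).2.1)) + px z)
        ((P j).1.2 + Δ ((P j).1.1))‖ = ‖Aseq j‖ := by
      rw [norm_gradient_eq, hAdef]
      congr 1
      have hd1 : DifferentiableAt ℝ (fun z : EuclideanSpace ℝ (Fin n) =>
          ψ (z, (P j).2.2 + Δ ((P j).2.1))) ((P j).1.2 + Δ ((P j).1.1)) :=
        ((hψdiff _).hasFDerivAt.comp _
          (hasFDerivAt_prodMk_left _ ((P j).2.2 + Δ ((P j).2.1)))).differentiableAt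
      have hd2 : DifferentiableAt ℝ px ((P j).1.2 + Δ ((P j).1.1)) :=
        (hpx2.differentiable two_ne_zero) _
      rw [fderiv_fun_add hd1 hd2, fderiv_partial_fst ψ hψdiff]
    simp only [hspell] at hsub
    rw [hg1d, hgrad1] at hsub
    -- the supersolution test at ((P j).2.1, (P j).2.2)
    have hφ2C2b : IsC2b (fun z => -(ψ ((P j).1.2 + Δ ((P j).1.1), z) + py z)) := by
      refine isC2b_neg (isC2b_add ?_ hpyC2b)
      have h1 := isC2b_comp_affine hψC
        (ContinuousLinearMap.inr ℝ (EuclideanSpace ℝ (Fin n)) (EuclideanSpace ℝ (Fin n)))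
        hinrnorm (((P j).1.2 + Δ ((P j).1.1), (0 : EuclideanSpace ℝ (Fin n))))
      simpa only [ContinuousLinearMap.inr_apply, Prod.mk_add_mk, add_zero, zero_add] using h1
    have hg2C : ContDiff ℝ 1 (fun s : ℝ => -(κ j/2*((P j).1.1 - s)^2)) :=
      (contDiff_const.mul ((contDiff_const.sub contDiff_id).pow 2)).neg
    have hlmin : IsLocalMin (fun p : ℝ × EuclideanSpace ℝ (Fin n) =>
        v p.1 p.2 - (-(ψ ((P j).1.2 + Δ ((P j).1.1), p.2 + Δ p.1) + py (p.2 + Δ p.1)))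
          - (-(κ j/2*((P j).1.1 - p.1)^2))) ((P j).2.1, (P j).2.2) := by
      have hUo : IsOpen (Ioo a b ×ˢ Metric.ball y₀ r) := isOpen_Ioo.prod Metric.isOpen_ball
      have hmem : ((P j).2.1, (P j).2.2) ∈ Ioo a b ×ˢ Metric.ball y₀ r := ⟨hsj, hyj⟩
      filter_upwards [hUo.mem_nhds hmem] with p hp
      obtain ⟨hp1, hp2⟩ := hp
      have hpD : (((P j).1.1, (P j).1.2), (p.1, p.2)) ∈ Dom := by
        rw [hDomdef]
        exact ⟨⟨hPt, hPx⟩, Ioo_subset_Icc_self hp1, Metric.ball_subset_closedBall hp2⟩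
      have h1 := hPmax j (((P j).1.1, (P j).1.2), (p.1, p.2)) hpD
      simp only [hΘdef] at h1
      have hgoal : v ((P j).2.1) ((P j).2.2)
          - (-(ψ ((P j).1.2 + Δ ((P j).1.1), (P j).2.2 + Δ ((P j).2.1))
              + py ((P j).2.2 + Δ ((P j).2.1))))
          - (-(κ j/2*((P j).1.1 - (P j).2.1)^2))
          ≤ v p.1 p.2 - (-(ψ ((P j).1.2 + Δ ((P j).1.1), p.2 + Δ p.1) + py (p.2 + Δ p.1)))
          - (-(κ j/2*((P j).1.1 - p.1)^2)) := by
        linarith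
      exact hgoal
    have hsup := hvTest (fun z => -(ψ ((P j).1.2 + Δ ((P j).1.1), z) + py z))
      (fun s : ℝ => -(κ j/2*((P j).1.1 - s)^2)) ((P j).2.1) ((P j).2.2)
      hφ2C2b hg2C (habsub (Ioo_subset_Icc_self hsj)) hlmin
    have hg2d : deriv (fun s : ℝ => -(κ j/2*((P j).1.1 - s)^2)) ((P j).2.1)
        = κ j*((P j).1.1 - (P j).2.1) := by
      have h4 := ((((hasDerivAt_id ((P j).2.1)).const_sub ((P j).1.1)).fun_pow 2).const_mul
        (κ j/2)).neg
      have h5 : deriv (fun s : ℝ => -(κ j/2*((P j).1.1 - s)^2)) ((P j).2.1)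
          = -(κ j/2 * (2 * ((P j).1.1 - (P j).2.1)^1 * (-1))) := h4.deriv
      rw [h5]
      ring
    have hgrad2 : ‖gradient (fun z => -(ψ ((P j).1.2 + Δ ((P j).1.1), z) + py z))
        ((P j).2.2 + Δ ((P j).2.1))‖ = ‖Bseq j‖ := by
      rw [norm_gradient_eq, hBdef]
      have hd1 : DifferentiableAt ℝ (fun z : EuclideanSpace ℝ (Fin n) =>
          ψ ((P j).1.2 + Δ ((P j).1.1), z)) ((P j).2.2 + Δ ((P j).2.1)) :=
        ((hψdiff _).hasFDerivAt.comp _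
          (hasFDerivAt_prodMk_right ((P j).1.2 + Δ ((P j).1.1)) _)).differentiableAt
      have hd2 : DifferentiableAt ℝ py ((P j).2.2 + Δ ((P j).2.1)) :=
        (hpy2.differentiable two_ne_zero) _
      rw [fderiv_fun_neg, norm_neg, fderiv_fun_add hd1 hd2, fderiv_partial_snd ψ hψdiff]
    simp only [hspell] at hsup
    rw [hg2d, hgrad2] at hsup
    linarith
  -- limits of all quantities
  have htlim : Tendsto (fun j => (P j).1.1) atTop (𝓝 s₀) :=
    ((continuous_fst.comp continuous_fst).tendsto q₀).comp hPlim
  have hslim : Tendsto (fun j => (P j).2.1) atTop (𝓝 s₀) :=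
    ((continuous_fst.comp continuous_snd).tendsto q₀).comp hPlim
  have hxlim : Tendsto (fun j => (P j).1.2) atTop (𝓝 x₀) :=
    ((continuous_snd.comp continuous_fst).tendsto q₀).comp hPlim
  have hylim : Tendsto (fun j => (P j).2.2) atTop (𝓝 y₀) :=
    ((continuous_snd.comp continuous_snd).tendsto q₀).comp hPlim
  have hΔtlim : Tendsto (fun j => Δ ((P j).1.1)) atTop (𝓝 (Δ s₀)) :=
    Filter.Tendsto.comp (g := Δ) (hΔat _ hs₀ab) htlim
  have hΔslim : Tendsto (fun j => Δ ((P j).2.1)) atTop (𝓝 (Δ s₀)) :=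
    Filter.Tendsto.comp (g := Δ) (hΔat _ hs₀ab) hslim
  have hwlim : Tendsto (fun j => (P j).1.2 + Δ ((P j).1.1)) atTop (𝓝 z₀) := by
    rw [hz₀def]; exact hxlim.add hΔtlim
  have hclim : Tendsto (fun j => (P j).2.2 + Δ ((P j).2.1)) atTop (𝓝 z₁) := by
    rw [hz₁def]; exact hylim.add hΔslim
  have hpairlim : Tendsto (fun j => ((P j).1.2 + Δ ((P j).1.1), (P j).2.2 + Δ ((P j).2.1)))
      atTop (𝓝 (z₀, z₁)) := hwlim.prodMk_nhds hclim
  have hfψcont : Continuous (fderiv ℝ ψ) := hψC.1.continuous_fderiv two_ne_zero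
  have hcomp_inl : Continuous
      (fun A : (EuclideanSpace ℝ (Fin n) × EuclideanSpace ℝ (Fin n)) →L[ℝ] ℝ =>
        A.comp (ContinuousLinearMap.inl ℝ (EuclideanSpace ℝ (Fin n))
          (EuclideanSpace ℝ (Fin n)))) := by
    refine (LipschitzWith.of_dist_le_mul (K := 1) fun A B' => ?_).continuous
    rw [dist_eq_norm, dist_eq_norm, ← ContinuousLinearMap.sub_comp, NNReal.coe_one, one_mul]
    calc ‖(A - B').comp (ContinuousLinearMap.inl ℝ (EuclideanSpace ℝ (Fin n))
          (EuclideanSpace ℝ (Fin n)))‖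
        ≤ ‖A - B'‖ * ‖ContinuousLinearMap.inl ℝ (EuclideanSpace ℝ (Fin n))
          (EuclideanSpace ℝ (Fin n))‖ := ContinuousLinearMap.opNorm_comp_le _ _
      _ ≤ ‖A - B'‖ * 1 := mul_le_mul_of_nonneg_left hinlnorm (norm_nonneg _)
      _ = ‖A - B'‖ := mul_one _
  have hcomp_inr : Continuous
      (fun A : (EuclideanSpace ℝ (Fin n) × EuclideanSpace ℝ (Fin n)) →L[ℝ] ℝ =>
        A.comp (ContinuousLinearMap.inr ℝ (EuclideanSpace ℝ (Fin n))
          (EuclideanSpace ℝ (Fin n)))) := by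
    refine (LipschitzWith.of_dist_le_mul (K := 1) fun A B' => ?_).continuous
    rw [dist_eq_norm, dist_eq_norm, ← ContinuousLinearMap.sub_comp, NNReal.coe_one, one_mul]
    calc ‖(A - B').comp (ContinuousLinearMap.inr ℝ (EuclideanSpace ℝ (Fin n))
          (EuclideanSpace ℝ (Fin n)))‖
        ≤ ‖A - B'‖ * ‖ContinuousLinearMap.inr ℝ (EuclideanSpace ℝ (Fin n))
          (EuclideanSpace ℝ (Fin n))‖ := ContinuousLinearMap.opNorm_comp_le _ _
      _ ≤ ‖A - B'‖ * 1 := mul_le_mul_of_nonneg_left hinrnorm (norm_nonneg _)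
      _ = ‖A - B'‖ := mul_one _
  have hAlim : Tendsto Aseq atTop (𝓝 ((fderiv ℝ ψ (z₀, z₁)).comp
      (ContinuousLinearMap.inl ℝ (EuclideanSpace ℝ (Fin n)) (EuclideanSpace ℝ (Fin n))))) := by
    rw [hAdef]
    have h1 : Tendsto (fun j => (fderiv ℝ ψ ((P j).1.2 + Δ ((P j).1.1),
        (P j).2.2 + Δ ((P j).2.1))).comp (ContinuousLinearMap.inl ℝ (EuclideanSpace ℝ (Fin n))
          (EuclideanSpace ℝ (Fin n)))) atTop (𝓝 ((fderiv ℝ ψ (z₀, z₁)).comp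
        (ContinuousLinearMap.inl ℝ (EuclideanSpace ℝ (Fin n)) (EuclideanSpace ℝ (Fin n))))) :=
      (hcomp_inl.tendsto _).comp ((hfψcont.tendsto _).comp hpairlim)
    have h2 : Tendsto (fun j => fderiv ℝ px ((P j).1.2 + Δ ((P j).1.1))) atTop (𝓝 0) := by
      have h3 := ((hpx2.continuous_fderiv two_ne_zero).tendsto z₀).comp hwlim
      rwa [hpxfd] at h3
    simpa using h1.add h2
  have hBlim : Tendsto Bseq atTop (𝓝 ((fderiv ℝ ψ (z₀, z₁)).comp
      (ContinuousLinearMap.inr ℝ (EuclideanSpace ℝ (Fin n)) (EuclideanSpace ℝ (Fin n))))) := by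
    rw [hBdef]
    have h1 : Tendsto (fun j => (fderiv ℝ ψ ((P j).1.2 + Δ ((P j).1.1),
        (P j).2.2 + Δ ((P j).2.1))).comp (ContinuousLinearMap.inr ℝ (EuclideanSpace ℝ (Fin n))
          (EuclideanSpace ℝ (Fin n)))) atTop (𝓝 ((fderiv ℝ ψ (z₀, z₁)).comp
        (ContinuousLinearMap.inr ℝ (EuclideanSpace ℝ (Fin n)) (EuclideanSpace ℝ (Fin n))))) :=
      (hcomp_inr.tendsto _).comp ((hfψcont.tendsto _).comp hpairlim)
    have h2 : Tendsto (fun j => fderiv ℝ py ((P j).2.2 + Δ ((P j).2.1))) atTop (𝓝 0) := by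
      have h3 := ((hpy2.continuous_fderiv two_ne_zero).tendsto z₁).comp hclim
      rwa [hpyfd] at h3
    simpa using h1.add h2
  have hnA : Tendsto (fun j => ‖Aseq j‖) atTop (𝓝 ‖(fderiv ℝ ψ (z₀, z₁)).comp
      (ContinuousLinearMap.inl ℝ (EuclideanSpace ℝ (Fin n)) (EuclideanSpace ℝ (Fin n)))‖) :=
    (continuous_norm.tendsto _).comp hAlim
  have hnB : Tendsto (fun j => ‖Bseq j‖) atTop (𝓝 ‖(fderiv ℝ ψ (z₀, z₁)).comp
      (ContinuousLinearMap.inr ℝ (EuclideanSpace ℝ (Fin n)) (EuclideanSpace ℝ (Fin n)))‖) :=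
    (continuous_norm.tendsto _).comp hBlim
  have hVx : Tendsto (fun j => V ((P j).1.2)) atTop (𝓝 (V x₀)) := by
    rw [← tendsto_sub_nhds_zero_iff]
    have hb : Tendsto (fun j => L_V * ‖(P j).1.2 - x₀‖) atTop (𝓝 0) := by
      have h1 : Tendsto (fun j => ‖(P j).1.2 - x₀‖) atTop (𝓝 0) :=
        tendsto_iff_norm_sub_tendsto_zero.1 hxlim
      simpa using h1.const_mul L_V
    refine squeeze_zero_norm (fun j => ?_) hb
    rw [Real.norm_eq_abs]
    exact hVlip _ _
  have hVy : Tendsto (fun j => V ((P j).2.2)) atTop (𝓝 (V y₀)) := by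
    rw [← tendsto_sub_nhds_zero_iff]
    have hb : Tendsto (fun j => L_V * ‖(P j).2.2 - y₀‖) atTop (𝓝 0) := by
      have h1 : Tendsto (fun j => ‖(P j).2.2 - y₀‖) atTop (𝓝 0) :=
        tendsto_iff_norm_sub_tendsto_zero.1 hylim
      simpa using h1.const_mul L_V
    refine squeeze_zero_norm (fun j => ?_) hb
    rw [Real.norm_eq_abs]
    exact hVlip _ _
  have hdg : Tendsto (fun j => deriv g ((P j).1.1)) atTop (𝓝 (deriv g s₀)) :=
    ((hgC.continuous_deriv le_rfl).tendsto s₀).comp htlim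
  have hLHS : Tendsto (fun j => -deriv g ((P j).1.1) - 2*((P j).1.1 - s₀)) atTop
      (𝓝 (-deriv g s₀)) := by
    have h1 := hdg.neg.sub ((htlim.sub_const s₀).const_mul 2)
    simpa using h1
  have hRHS : Tendsto (fun j => V ((P j).1.2) - V ((P j).2.2) - (‖Aseq j‖^2 - ‖Bseq j‖^2)/2)
      atTop (𝓝 (V x₀ - V y₀ - (‖(fderiv ℝ ψ (z₀, z₁)).comp
        (ContinuousLinearMap.inl ℝ (EuclideanSpace ℝ (Fin n)) (EuclideanSpace ℝ (Fin n)))‖^2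
        - ‖(fderiv ℝ ψ (z₀, z₁)).comp (ContinuousLinearMap.inr ℝ (EuclideanSpace ℝ (Fin n))
          (EuclideanSpace ℝ (Fin n)))‖^2)/2)) :=
    (hVx.sub hVy).sub (((hnA.pow 2).sub (hnB.pow 2)).div_const 2)
  have hfinal := le_of_tendsto_of_tendsto hLHS hRHS hIneq
  -- identify the gradients in the goal
  have hdψ1 : Differentiable ℝ (fun x' : EuclideanSpace ℝ (Fin n) => ψ (x', z₁)) := fun w =>
    ((hψdiff (w, z₁)).hasFDerivAt.comp w (hasFDerivAt_prodMk_left w z₁)).differentiableAt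
  have hdψ2 : Differentiable ℝ (fun y' : EuclideanSpace ℝ (Fin n) => ψ (z₀, y')) := fun w =>
    ((hψdiff (z₀, w)).hasFDerivAt.comp w (hasFDerivAt_prodMk_right z₀ w)).differentiableAt
  have hgx2 : ‖gradient (fun x : EuclideanSpace ℝ (Fin n) => ψ (x + Δ s₀, z₁)) x₀‖^2
      = ‖(fderiv ℝ ψ (z₀, z₁)).comp (ContinuousLinearMap.inl ℝ (EuclideanSpace ℝ (Fin n))
        (EuclideanSpace ℝ (Fin n)))‖^2 := by
    rw [norm_gradient_eq]
    have h1 : fderiv ℝ (fun x : EuclideanSpace ℝ (Fin n) => ψ (x + Δ s₀, z₁)) x₀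
        = fderiv ℝ (fun x' : EuclideanSpace ℝ (Fin n) => ψ (x', z₁)) (x₀ + Δ s₀) :=
      fderiv_comp_add_const' (fun x' : EuclideanSpace ℝ (Fin n) => ψ (x', z₁)) hdψ1 (Δ s₀) x₀
    rw [h1, ← hz₀def, fderiv_partial_fst ψ hψdiff z₀ z₁]
  have hgy2 : ‖gradient (fun y : EuclideanSpace ℝ (Fin n) => ψ (z₀, y + Δ s₀)) y₀‖^2
      = ‖(fderiv ℝ ψ (z₀, z₁)).comp (ContinuousLinearMap.inr ℝ (EuclideanSpace ℝ (Fin n))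
        (EuclideanSpace ℝ (Fin n)))‖^2 := by
    rw [norm_gradient_eq]
    have h1 : fderiv ℝ (fun y : EuclideanSpace ℝ (Fin n) => ψ (z₀, y + Δ s₀)) y₀
        = fderiv ℝ (fun y' : EuclideanSpace ℝ (Fin n) => ψ (z₀, y')) (y₀ + Δ s₀) :=
      fderiv_comp_add_const' (fun y' : EuclideanSpace ℝ (Fin n) => ψ (z₀, y')) hdψ2 (Δ s₀) y₀
    rw [h1, ← hz₁def, fderiv_partial_snd ψ hψdiff z₁ z₀]
  linarith [hfinal, hgx2, hgy2]
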